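/- For b > 1 and real x, define I(b,x) = (1/(2π)) ∫₀^{2π} exp(-i x · arg(1 - b^{-1} e^{iθ})) dθ. Then I(b,x) = (2/π) ∫₀¹ cos(x · arcsin(t/b)) / √(1 - t²) dt. -/

import Mathlib

open Real Complex intervalIntegral

/-!
Put `g u = arcsin (sin u / b)`. Along the reparametrisation `θ = u - g u` of `[0, 2π]` one has
`arg (1 - b⁻¹ e^{iθ}) = -g u`; as `g` vanishes at `0` and `2π`, the `g'` part of the Jacobian
integrates to zero and the integral becomes `∫₀^{2π} e^{i x g u} du`. Since `g (u + π) = -g u`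
and `g (π - u) = g u`, this is `4 ∫₀^{π/2} cos (x g u) du`, and `t = sin u` finishes.
-/

open Set MeasureTheory

section

variable {b : ℝ}

lemma abs_sin_div_lt_one (hb : 1 < b) (u : ℝ) : |Real.sin u / b| < 1 := by
  rw [abs_div, abs_of_pos (by linarith : (0 : ℝ) < b), div_lt_one (by linarith)]
  exact (abs_sin_le_one u).trans_lt hb

lemma contDiff_arcsin_sin_div (hb : 1 < b) : ContDiff ℝ 1 fun u => arcsin (Real.sin u / b) := by
  refine contDiff_iff_contDiffAt.2 fun u => ?_
  obtain ⟨h₁, h₂⟩ := abs_lt.1 (abs_sin_div_lt_one hb u)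
  exact ContDiffAt.comp (g := arcsin) u (contDiffAt_arcsin h₁.ne' h₂.ne)
    (Real.contDiff_sin.div_const b).contDiffAt

/-- With `g = arcsin (sin u / b)`, `e^{ig} - b⁻¹ e^{iu}` is real because `b sin g = sin u`, and
positive because `b cos g = √(b² - sin² u) > |cos u|`. -/
lemma one_sub_inv_mul_exp_sub_arcsin (hb : 1 < b) (u : ℝ) :
    ∃ ρ : ℝ, 0 < ρ ∧ 1 - (b : ℂ)⁻¹ * Complex.exp (↑(u - arcsin (Real.sin u / b)) * I) =
      ρ * Complex.exp (↑(-arcsin (Real.sin u / b)) * I) := by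
  set g := arcsin (Real.sin u / b)
  have hb0 : 0 < b := by linarith
  obtain ⟨h₁, h₂⟩ := abs_lt.1 (abs_sin_div_lt_one hb u)
  have hsin : Real.sin g = Real.sin u / b := sin_arcsin h₁.le h₂.le
  have hcos : (b * Real.cos g) ^ 2 = b ^ 2 - Real.sin u ^ 2 := by
    rw [mul_pow, Real.cos_sq', hsin]; field_simp
  refine ⟨Real.cos g - Real.cos u / b, ?_, ?_⟩
  · have hcos_lt : Real.cos u < b * Real.cos g := by
      nlinarith [Real.sin_sq_add_cos_sq u, mul_nonneg hb0.le (cos_arcsin_nonneg (Real.sin u / b))]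
    rw [sub_pos, div_lt_iff₀ hb0]; linarith
  · have hreal : Complex.exp (g * I) - (b : ℂ)⁻¹ * Complex.exp (u * I) =
        ↑(Real.cos g - Real.cos u / b) := by
      rw [exp_mul_I, exp_mul_I, ← ofReal_cos, ← ofReal_sin, ← ofReal_cos, ← ofReal_sin, hsin]
      push_cast
      ring
    rw [← hreal, ofReal_sub, ofReal_neg, sub_mul, neg_mul, Complex.exp_sub, Complex.exp_neg]
    field_simp

lemma arg_one_sub_inv_mul_exp_sub_arcsin (hb : 1 < b) (u : ℝ) :
    arg (1 - (b : ℂ)⁻¹ * Complex.exp (↑(u - arcsin (Real.sin u / b)) * I)) =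
      -arcsin (Real.sin u / b) := by
  obtain ⟨ρ, hρ, h⟩ := one_sub_inv_mul_exp_sub_arcsin hb u
  rw [h, arg_real_mul _ hρ, exp_mul_I, arg_cos_add_sin_mul_I]
  constructor <;> linarith [neg_pi_div_two_le_arcsin (Real.sin u / b),
    arcsin_le_pi_div_two (Real.sin u / b), pi_pos]

lemma continuous_arg_one_sub_inv_mul_exp (hb : 1 < b) :
    Continuous fun θ : ℝ => arg (1 - (b : ℂ)⁻¹ * Complex.exp (θ * I)) := by
  refine continuous_iff_continuousAt.2 fun θ => (continuousAt_arg ?_).comp (by fun_prop)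
  rw [sub_eq_add_neg]
  refine mem_slitPlane_of_norm_lt_one ?_
  rw [norm_neg, norm_mul, norm_exp_ofReal_mul_I, mul_one, norm_inv, norm_real, Real.norm_eq_abs,
    abs_of_pos (by linarith)]
  exact inv_lt_one_of_one_lt₀ hb

theorem integral_comp_arg_one_sub_inv_mul_exp {E : Type*} [NormedAddCommGroup E]
    [NormedSpace ℝ E] [CompleteSpace E] (hb : 1 < b) {f : ℝ → E} (hf : Continuous f) :
    ∫ θ in (0 : ℝ)..(2 * π), f (arg (1 - (b : ℂ)⁻¹ * Complex.exp (θ * I))) =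
      ∫ u in (0 : ℝ)..(2 * π), f (-arcsin (Real.sin u / b)) := by
  set g : ℝ → ℝ := fun u => arcsin (Real.sin u / b)
  have hg : ContDiff ℝ 1 g := contDiff_arcsin_sin_div hb
  have hg' : Continuous (deriv g) := hg.continuous_deriv le_rfl
  have hg_deriv : ∀ u, HasDerivAt g (deriv g u) u :=
    fun u => (hg.differentiable one_ne_zero u).hasDerivAt
  have harg : ∀ u, arg (1 - (b : ℂ)⁻¹ * Complex.exp (↑(u - g u) * I)) = -g u :=
    arg_one_sub_inv_mul_exp_sub_arcsin hb
  have hg0 : g 0 = 0 := by simp [g]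
  have hg2π : g (2 * π) = 0 := by simp [g]
  have hsubst := integral_deriv_smul_comp (a := 0) (b := 2 * π) (f := fun u => u - g u)
    (fun u _ => (hasDerivAt_id u).sub (hg_deriv u)) (continuous_const.sub hg').continuousOn
    (hf.comp (continuous_arg_one_sub_inv_mul_exp hb))
  have hcorr := integral_deriv_smul_comp (a := 0) (b := 2 * π) (fun u _ => hg_deriv u)
    hg'.continuousOn (hf.comp continuous_neg)
  simp only [Function.comp_apply, harg, hg0, hg2π, sub_zero,
    integral_same, sub_smul, one_smul] at hsubst hcorr
  rw [← hsubst, intervalIntegral.integral_sub, hcorr, sub_zero]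
  · exact (hf.comp (continuous_neg.comp hg.continuous)).intervalIntegrable _ _
  · exact (hg'.smul (hf.comp (continuous_neg.comp hg.continuous))).intervalIntegrable _ _

end

theorem integral_eq_two_nsmul_integral_half_of_symm {E : Type*} [NormedAddCommGroup E]
    [NormedSpace ℝ E] {f : ℝ → E} {a : ℝ} (hf : IntervalIntegrable f volume 0 a)
    (hsymm : ∀ u, f (a - u) = f u) :
    ∫ u in (0 : ℝ)..a, f u = 2 • ∫ u in (0 : ℝ)..(a / 2), f u := by
  have hhalf : a / 2 ∈ uIcc 0 a := by
    rcases le_total 0 a with ha | ha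
    · exact mem_uIcc_of_le (by linarith) (by linarith)
    · exact mem_uIcc_of_ge (by linarith) (by linarith)
  have hreflect : ∫ u in (a / 2)..a, f u = ∫ u in (0 : ℝ)..(a / 2), f u := by
    have h := integral_comp_sub_left f a (a := 0) (b := a / 2)
    simp only [hsymm, sub_zero, show a - a / 2 = a / 2 by ring] at h
    exact h.symm
  rw [← integral_add_adjacent_intervals (hf.mono_set (uIcc_subset_uIcc left_mem_uIcc hhalf))
    (hf.mono_set (uIcc_subset_uIcc hhalf right_mem_uIcc)), hreflect, two_nsmul]

theorem integral_exp_mul_arcsin_sin_div_mul_I (b x : ℝ) :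
    ∫ u in (0 : ℝ)..(2 * π), Complex.exp (↑(x * arcsin (Real.sin u / b)) * I) =
      ↑(4 * ∫ u in (0 : ℝ)..(π / 2), Real.cos (x * arcsin (Real.sin u / b))) := by
  set h : ℝ → ℝ := fun u => x * arcsin (Real.sin u / b)
  have hexp : Continuous fun u => Complex.exp (h u * I) := by fun_prop
  have hexp_neg : Continuous fun u => Complex.exp (-h u * I) := by fun_prop
  have hshift : ∀ u, h (u + π) = -h u := by
    simp [h, Real.sin_add_pi, neg_div, arcsin_neg]
  have hsymm : ∀ u, Real.cos (h (π - u)) = Real.cos (h u) := by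
    simp [h, Real.sin_pi_sub]
  have hshifted : ∫ u in π..(2 * π), Complex.exp (h u * I) =
      ∫ u in (0 : ℝ)..π, Complex.exp (-h u * I) := by
    have hcomp := integral_comp_add_right (fun u => Complex.exp (h u * I)) π (a := 0) (b := π)
    rw [zero_add, ← two_mul] at hcomp
    simpa [hshift] using hcomp.symm
  calc ∫ u in (0 : ℝ)..(2 * π), Complex.exp (h u * I)
      = ∫ u in (0 : ℝ)..π, (Complex.exp (h u * I) + Complex.exp (-h u * I)) := by
        rw [← integral_add_adjacent_intervals (b := π) (hexp.intervalIntegrable _ _)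
          (hexp.intervalIntegrable _ _), hshifted, intervalIntegral.integral_add
          (hexp.intervalIntegrable _ _) (hexp_neg.intervalIntegrable _ _)]
    _ = ↑(2 * ∫ u in (0 : ℝ)..π, Real.cos (h u)) := by
        simp_rw [← two_cos, ← ofReal_cos, ← ofReal_ofNat, ← ofReal_mul,
          intervalIntegral.integral_ofReal, intervalIntegral.integral_const_mul]
    _ = ↑(4 * ∫ u in (0 : ℝ)..(π / 2), Real.cos (h u)) := by
        have hcos : Continuous fun u => Real.cos (h u) := by fun_prop
        rw [integral_eq_two_nsmul_integral_half_of_symm (hcos.intervalIntegrable _ _) hsymm]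
        push_cast
        ring

theorem integral_cos_mul_arcsin_sin_div (b x : ℝ) :
    ∫ u in (0 : ℝ)..(π / 2), Real.cos (x * arcsin (Real.sin u / b)) =
      ∫ t in (0 : ℝ)..1, Real.cos (x * arcsin (t / b)) / √(1 - t ^ 2) := by
  have h := integral_deriv_smul_comp_of_deriv_nonneg (a := 0) (b := 1) (f := arcsin)
    (f' := fun t => 1 / √(1 - t ^ 2)) (g := fun u => Real.cos (x * arcsin (Real.sin u / b)))
    continuous_arcsin.continuousOn
    (fun t ht => by
      simp only [zero_le_one, min_eq_left, max_eq_right, mem_Ioo] at ht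
      exact hasDerivAt_arcsin (by linarith) ht.2.ne)
    (fun t _ => by positivity)
  rw [arcsin_zero, arcsin_one] at h
  rw [← h]
  refine integral_congr fun t ht => ?_
  rw [uIcc_of_le zero_le_one] at ht
  simp only [Function.comp_apply, smul_eq_mul, sin_arcsin (by linarith [ht.1]) ht.2]
  ring

theorem I_eq_arcsin_integral (b : ℝ) (hb : 1 < b) (x : ℝ) :
    (1 / (2 * π) : ℂ) *
        ∫ θ in (0:ℝ)..(2 * π),
          Complex.exp (-Complex.I * x *
            (Complex.arg (1 - (b:ℂ)⁻¹ * Complex.exp (θ * Complex.I)) : ℂ)) =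
      (((2 / π) * ∫ t in (0:ℝ)..1,
          Real.cos (x * Real.arcsin (t / b)) / Real.sqrt (1 - t ^ 2) : ℝ) : ℂ) := by
  have hexp : ∀ u : ℝ, Complex.exp (-I * x * ↑(-arcsin (Real.sin u / b))) =
      Complex.exp (↑(x * arcsin (Real.sin u / b)) * I) := fun u => by push_cast; ring_nf
  rw [integral_comp_arg_one_sub_inv_mul_exp hb (f := fun s : ℝ => Complex.exp (-I * x * s))
    (by fun_prop)]
  simp only [hexp, integral_exp_mul_arcsin_sin_div_mul_I, integral_cos_mul_arcsin_sin_div]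
  push_cast
  field_simp
  ring
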